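/- Let f be a twice differentiable probability density on ℝ with ∫ (f''(y))²/f(y) dy < ∞ (integrand 0 where f = 0), and let φ_σ be the N(0, σ²) density. Then the convolution f_σ = f * φ_σ satisfies ∫ (f_σ''(y))²/f_σ(y) dy ≤ ∫ (f''(y))²/f(y) dy. -/

import Mathlib

open MeasureTheory Real Filter Topology Metric
open scoped ENNReal

/-- The Gaussian density with scale `σ`. -/
noncomputable def gaussKernel (σ x : ℝ) : ℝ :=
  (Real.sqrt (2 * Real.pi) * σ)⁻¹ * Real.exp (-x ^ 2 / (2 * σ ^ 2))

lemma sqrt2pi_pos : 0 < Real.sqrt (2 * Real.pi) :=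
  Real.sqrt_pos.2 (by positivity)

lemma gaussKernel_pos {σ : ℝ} (hσ : 0 < σ) (x : ℝ) : 0 < gaussKernel σ x := by
  unfold gaussKernel
  have := sqrt2pi_pos
  positivity

lemma gaussKernel_le {σ : ℝ} (hσ : 0 < σ) (x : ℝ) :
    gaussKernel σ x ≤ (Real.sqrt (2 * Real.pi) * σ)⁻¹ := by
  unfold gaussKernel
  have h1 : Real.exp (-x ^ 2 / (2 * σ ^ 2)) ≤ 1 := by
    rw [Real.exp_le_one_iff]
    have h : (0:ℝ) ≤ x ^ 2 / (2 * σ ^ 2) := by positivity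
    have h2 : -x ^ 2 / (2 * σ ^ 2) = -(x ^ 2 / (2 * σ ^ 2)) := neg_div _ _
    linarith
  have h2 : (0:ℝ) ≤ (Real.sqrt (2 * Real.pi) * σ)⁻¹ := by
    have := sqrt2pi_pos; positivity
  calc (Real.sqrt (2 * Real.pi) * σ)⁻¹ * Real.exp (-x ^ 2 / (2 * σ ^ 2))
      ≤ (Real.sqrt (2 * Real.pi) * σ)⁻¹ * 1 := by gcongr
    _ = _ := mul_one _

lemma gaussKernel_eq {σ : ℝ} (hσ : 0 < σ) :
    gaussKernel σ = fun x => (Real.sqrt (2 * Real.pi) * σ)⁻¹ *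
      Real.exp (-(2 * σ ^ 2)⁻¹ * x ^ 2) := by
  funext x
  unfold gaussKernel
  congr 1
  ring_nf

lemma gaussKernel_integrable {σ : ℝ} (hσ : 0 < σ) : Integrable (gaussKernel σ) := by
  rw [gaussKernel_eq hσ]
  exact (integrable_exp_neg_mul_sq (by positivity)).const_mul _

lemma gaussKernel_integral {σ : ℝ} (hσ : 0 < σ) : ∫ x, gaussKernel σ x = 1 := by
  rw [gaussKernel_eq hσ]
  rw [MeasureTheory.integral_const_mul, integral_gaussian]
  have h1 : Real.pi / (2 * σ ^ 2)⁻¹ = 2 * Real.pi * σ ^ 2 := by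
    field_simp
  rw [h1]
  have h2 : Real.sqrt (2 * Real.pi * σ ^ 2) = Real.sqrt (2 * Real.pi) * σ := by
    rw [Real.sqrt_mul (by positivity), Real.sqrt_sq hσ.le]
  rw [h2]
  exact inv_mul_cancel₀ (by have := sqrt2pi_pos; positivity)

/-- a.e. on the zero set of a nonneg `C²` function, the second derivative vanishes. -/
lemma ae_deriv2_zero (f : ℝ → ℝ) (hnn : ∀ x, 0 ≤ f x) (hd1 : Differentiable ℝ f)
    (hd2 : Differentiable ℝ (deriv f)) :
    ∀ᵐ z, f z = 0 → deriv (deriv f) z = 0 := by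
  set Z : Set ℝ := {z | f z = 0} with hZdef
  have hZm : MeasurableSet Z := by
    have : Z = f ⁻¹' {0} := rfl
    rw [this]
    exact (hd1.continuous.measurable) (measurableSet_singleton 0)
  have h1 : ∀ z ∈ Z, deriv f z = 0 := by
    intro z hz
    refine IsLocalMin.deriv_eq_zero ?_
    refine Filter.Eventually.of_forall fun w => ?_
    have : f z = 0 := hz
    rw [this]; exact hnn w
  have hB := Besicovitch.ae_tendsto_measure_inter_div (volume : Measure ℝ) Z
  apply ae_imp_of_ae_restrict (s := Z)
  filter_upwards [hB, ae_restrict_mem hZm] with x hx hxZ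
  -- we prove deriv (deriv f) x = 0
  have hne : (𝓝[Z \ {x}] x).NeBot := by
    rw [← mem_closure_iff_nhdsWithin_neBot]
    by_contra hcl
    rw [Metric.mem_closure_iff] at hcl
    push_neg at hcl
    obtain ⟨ε, hε, hsep⟩ := hcl
    have hzero : ∀ r, 0 < r → r < ε → volume (Z ∩ closedBall x r) = 0 := by
      intro r hr hrε
      have hsub : Z ∩ closedBall x r ⊆ {x} := by
        intro z ⟨hz1, hz2⟩
        by_contra hzx
        have : z ∈ Z \ {x} := ⟨hz1, hzx⟩
        have := hsep z this
        have hd : dist x z ≤ r := by rw [dist_comm]; exact mem_closedBall.1 hz2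
        linarith
      exact measure_mono_null hsub (by simp)
    have h0 : Tendsto (fun r => volume (Z ∩ closedBall x r) / volume (closedBall x r))
        (𝓝[>] (0:ℝ)) (𝓝 (0:ℝ≥0∞)) := by
      refine Tendsto.congr' ?_ tendsto_const_nhds
      have hIoo : Set.Ioo (0:ℝ) ε ∈ 𝓝[>] (0:ℝ) := Ioo_mem_nhdsGT_of_mem ⟨le_refl 0, hε⟩
      filter_upwards [hIoo] with r hr
      rw [hzero r hr.1 hr.2, ENNReal.zero_div]
    exact zero_ne_one (tendsto_nhds_unique h0 hx)
  haveI := hne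
  have hd : Tendsto (slope (deriv f) x) (𝓝[≠] x) (𝓝 (deriv (deriv f) x)) :=
    hasDerivAt_iff_tendsto_slope.1 (hd2 x).hasDerivAt
  have hmono : 𝓝[Z \ {x}] x ≤ 𝓝[≠] x :=
    nhdsWithin_mono x (fun z hz => hz.2)
  have h2 : Tendsto (slope (deriv f) x) (𝓝[Z \ {x}] x) (𝓝 (deriv (deriv f) x)) :=
    hd.mono_left hmono
  have h3 : Tendsto (slope (deriv f) x) (𝓝[Z \ {x}] x) (𝓝 0) := by
    refine Tendsto.congr' ?_ tendsto_const_nhds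
    filter_upwards [self_mem_nhdsWithin] with z hz
    rw [slope_def_field, h1 z hz.1, h1 x hxZ]
    simp
  exact tendsto_nhds_unique h2 h3

/-- Cauchy–Schwarz core inequality. -/
lemma cs_core (w F φ : ℝ → ℝ) (hFnn : ∀ t, 0 ≤ F t) (hφpos : ∀ t, 0 < φ t)
    (hwm : Measurable w) (hFm : Measurable F) (hφm : Measurable φ)
    (h0 : ∀ᵐ t, F t = 0 → w t = 0)
    (hG : Integrable (fun t => (if F t = 0 then 0 else w t ^ 2 / F t) * φ t))
    (hF : Integrable (fun t => F t * φ t)) :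
    (∫ t, w t * φ t) ^ 2 ≤
      (∫ t, (if F t = 0 then 0 else w t ^ 2 / F t) * φ t) * ∫ t, F t * φ t := by
  set u : ℝ → ℝ := fun t => (if F t = 0 then 0 else w t / Real.sqrt (F t)) * Real.sqrt (φ t)
    with hu
  set v : ℝ → ℝ := fun t => Real.sqrt (F t) * Real.sqrt (φ t) with hv
  have hFset : MeasurableSet {t | F t = 0} := hFm (measurableSet_singleton 0)
  have hum : Measurable u :=
    (Measurable.ite hFset measurable_const (hwm.div (hFm.sqrt))).mul hφm.sqrt
  have hvm : Measurable v := hFm.sqrt.mul hφm.sqrt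
  have hu2 : ∀ t, u t ^ 2 = (if F t = 0 then 0 else w t ^ 2 / F t) * φ t := by
    intro t
    simp only [hu, mul_pow]
    rw [Real.sq_sqrt (hφpos t).le]
    congr 1
    by_cases h : F t = 0
    · simp [h]
    · rw [if_neg h, if_neg h, div_pow, Real.sq_sqrt (hFnn t)]
  have hv2 : ∀ t, v t ^ 2 = F t * φ t := by
    intro t
    simp only [hv, mul_pow, Real.sq_sqrt (hFnn t), Real.sq_sqrt (hφpos t).le]
  have huv : ∀ᵐ t, w t * φ t = u t * v t := by
    filter_upwards [h0] with t ht
    by_cases h : F t = 0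
    · simp [hu, hv, h, ht h]
    · have hsF : Real.sqrt (F t) ≠ 0 :=
        ne_of_gt (Real.sqrt_pos.2 (lt_of_le_of_ne (hFnn t) (Ne.symm h)))
      simp only [hu, hv, if_neg h]
      rw [show w t / Real.sqrt (F t) * Real.sqrt (φ t) * (Real.sqrt (F t) * Real.sqrt (φ t))
          = w t / Real.sqrt (F t) * Real.sqrt (F t) * (Real.sqrt (φ t) * Real.sqrt (φ t)) by ring,
        div_mul_cancel₀ _ hsF, Real.mul_self_sqrt (hφpos t).le]
  have huL2 : MemLp u 2 volume := by
    rw [memLp_two_iff_integrable_sq hum.aestronglyMeasurable]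
    refine hG.congr ?_
    exact Filter.Eventually.of_forall fun t => (hu2 t).symm
  have hvL2 : MemLp v 2 volume := by
    rw [memLp_two_iff_integrable_sq hvm.aestronglyMeasurable]
    refine hF.congr ?_
    exact Filter.Eventually.of_forall fun t => (hv2 t).symm
  have hconj : Real.HolderConjugate 2 2 := Real.HolderConjugate.two_two
  have h2 : ENNReal.ofReal (2:ℝ) = 2 := by norm_num
  have huL2' : MemLp (fun t => |u t|) (ENNReal.ofReal (2:ℝ)) volume := by
    rw [h2]; simpa [Real.norm_eq_abs] using huL2.norm
  have hvL2' : MemLp (fun t => |v t|) (ENNReal.ofReal (2:ℝ)) volume := by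
    rw [h2]; simpa [Real.norm_eq_abs] using hvL2.norm
  have hCS := integral_mul_le_Lp_mul_Lq_of_nonneg hconj
    (Filter.Eventually.of_forall fun t => abs_nonneg (u t))
    (Filter.Eventually.of_forall fun t => abs_nonneg (v t)) huL2' hvL2'
  -- rewrite rpow 2 as pow 2
  have hrw : ∀ (h : ℝ → ℝ), (∫ t, |h t| ^ (2:ℝ)) = ∫ t, h t ^ 2 := by
    intro h
    refine integral_congr_ae (Filter.Eventually.of_forall fun t => ?_)
    show |h t| ^ (2:ℝ) = h t ^ 2
    rw [show |h t| ^ (2:ℝ) = |h t| ^ ((2:ℕ):ℝ) by norm_num, Real.rpow_natCast, sq_abs]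
  rw [hrw u, hrw v] at hCS
  set A := ∫ t, u t ^ 2 with hA
  set B := ∫ t, v t ^ 2 with hB
  have hAnn : 0 ≤ A := integral_nonneg fun t => sq_nonneg _
  have hBnn : 0 ≤ B := integral_nonneg fun t => sq_nonneg _
  have habs : |∫ t, w t * φ t| ≤ ∫ t, |u t| * |v t| := by
    rw [integral_congr_ae huv]
    simpa [Real.norm_eq_abs, abs_mul] using
      norm_integral_le_integral_norm (μ := volume) (fun t => u t * v t)
  have hint_nn : 0 ≤ ∫ t, |u t| * |v t| :=
    integral_nonneg fun t => mul_nonneg (abs_nonneg _) (abs_nonneg _)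
  have key : (∫ t, w t * φ t) ^ 2 ≤ (A ^ ((1:ℝ)/2) * B ^ ((1:ℝ)/2)) ^ 2 := by
    rw [← sq_abs (∫ t, w t * φ t)]
    have h1 : |∫ t, w t * φ t| ≤ A ^ ((1:ℝ)/2) * B ^ ((1:ℝ)/2) := le_trans habs hCS
    exact pow_le_pow_left₀ (abs_nonneg _) h1 2
  have hhalf : ∀ (c : ℝ), 0 ≤ c → (c ^ ((1:ℝ)/2)) ^ 2 = c := by
    intro c hc
    rw [← Real.rpow_natCast (c ^ ((1:ℝ)/2)) 2, ← Real.rpow_mul hc]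
    norm_num
  have hsq : (A ^ ((1:ℝ)/2) * B ^ ((1:ℝ)/2)) ^ 2 = A * B := by
    rw [mul_pow, hhalf A hAnn, hhalf B hBnn]
  rw [hsq] at key
  have hAeq : A = ∫ t, (if F t = 0 then 0 else w t ^ 2 / F t) * φ t :=
    integral_congr_ae (Filter.Eventually.of_forall fun t => hu2 t)
  have hBeq : B = ∫ t, F t * φ t :=
    integral_congr_ae (Filter.Eventually.of_forall fun t => hv2 t)
  rw [hAeq, hBeq] at key
  exact key

/-- Gaussian smoothing does not increase `∫ (f'')²/f`: with `f_σ = f * φ_σ` and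
`f_σ''(y) = ∫ f''(y - x) φ_σ(x) dx`, one has `∫ (f_σ'')²/f_σ ≤ ∫ (f'')²/f`
(integrands taken to be 0 where the denominator vanishes). -/
theorem stmt7 (f : ℝ → ℝ) (σ : ℝ) (hσ : 0 < σ)
    (hnn : ∀ x, 0 ≤ f x)
    (hint : Integrable f)
    (hprob : ∫ x, f x = 1)
    (hd1 : Differentiable ℝ f)
    (hd2 : Differentiable ℝ (deriv f))
    (hfin : Integrable (fun y => if f y = 0 then 0 else (deriv (deriv f) y) ^ 2 / f y)) :
    (∫ y, (if (∫ x, f (y - x) * gaussKernel σ x) = 0 then 0 else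
        (∫ x, deriv (deriv f) (y - x) * gaussKernel σ x) ^ 2
          / (∫ x, f (y - x) * gaussKernel σ x)))
      ≤ ∫ y, (if f y = 0 then 0 else (deriv (deriv f) y) ^ 2 / f y) := by
  set φ := gaussKernel σ with hφdef
  have hφpos : ∀ x, 0 < φ x := gaussKernel_pos hσ
  have hφint : Integrable φ := gaussKernel_integrable hσ
  have hφ1 : ∫ x, φ x = 1 := gaussKernel_integral hσ
  have hφc : Continuous φ := by
    rw [hφdef]; unfold gaussKernel
    exact continuous_const.mul (Real.continuous_exp.comp (by fun_prop))
  set g : ℝ → ℝ := fun y => if f y = 0 then 0 else (deriv (deriv f) y) ^ 2 / f y with hgdef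
  set L := ContinuousLinearMap.mul ℝ ℝ with hL
  have hC : Integrable (convolution φ g L volume) := hφint.integrable_convolution L hfin
  have hval : ∫ y, convolution φ g L volume y = ∫ y, g y := by
    rw [integral_convolution L hφint hfin, hφ1]
    simp [hL]
  have h0 : ∀ᵐ z, f z = 0 → deriv (deriv f) z = 0 := ae_deriv2_zero f hnn hd1 hd2
  have key : ∀ᵐ y, (if (∫ x, f (y - x) * φ x) = 0 then 0 else
      (∫ x, deriv (deriv f) (y - x) * φ x) ^ 2 / (∫ x, f (y - x) * φ x))
        ≤ convolution φ g L volume y := by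
    filter_upwards [hφint.ae_convolution_exists L hfin] with y hy
    have hy' : Integrable (fun t => g (y - t) * φ t) := by
      have h1 : Integrable (fun t => φ t * g (y - t)) := by
        simpa only [ConvolutionExistsAt, hL, ContinuousLinearMap.mul_apply'] using hy
      simpa [mul_comm] using h1
    have hCyeq : convolution φ g L volume y = ∫ t, g (y - t) * φ t := by
      rw [convolution_def]
      simp only [hL, ContinuousLinearMap.mul_apply']
      exact integral_congr_ae (Filter.Eventually.of_forall fun t => mul_comm _ _)
    have hFint : Integrable (fun t => f (y - t) * φ t) := by
      have h1 : Integrable (fun t => f (y - t)) := by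
        simpa [neg_sub] using (hint.comp_neg).comp_sub_right y
      have h2 : Integrable (fun t => φ t * f (y - t)) := by
        refine h1.bdd_mul (c := (Real.sqrt (2 * Real.pi) * σ)⁻¹) hφc.aestronglyMeasurable (Filter.Eventually.of_forall fun x => ?_)
        rw [Real.norm_of_nonneg (hφpos x).le]
        exact gaussKernel_le hσ x
      simpa [mul_comm] using h2
    have h0y : ∀ᵐ t, f (y - t) = 0 → deriv (deriv f) (y - t) = 0 :=
      ((Measure.measurePreserving_sub_left volume y).quasiMeasurePreserving).ae h0
    have hDnn : 0 ≤ ∫ x, f (y - x) * φ x :=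
      integral_nonneg fun x => mul_nonneg (hnn _) (hφpos x).le
    by_cases hD : (∫ x, f (y - x) * φ x) = 0
    · rw [if_pos hD, hCyeq]
      refine integral_nonneg fun t => mul_nonneg ?_ (hφpos t).le
      by_cases h : f (y - t) = 0
      · simp [hgdef, h]
      · simp only [hgdef, if_neg h]
        exact div_nonneg (sq_nonneg _) (hnn _)
    · rw [if_neg hD]
      have hDpos : 0 < ∫ x, f (y - x) * φ x := lt_of_le_of_ne hDnn (Ne.symm hD)
      rw [div_le_iff₀ hDpos, hCyeq]
      have hcs := cs_core (fun t => deriv (deriv f) (y - t)) (fun t => f (y - t)) φ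
        (fun t => hnn _) hφpos
        ((measurable_deriv _).comp (measurable_const.sub measurable_id))
        (hd1.continuous.measurable.comp (measurable_const.sub measurable_id))
        hφc.measurable h0y (by simpa [hgdef] using hy') hFint
      calc (∫ x, deriv (deriv f) (y - x) * φ x) ^ 2
          ≤ (∫ t, (if f (y - t) = 0 then 0 else (deriv (deriv f) (y - t)) ^ 2 / f (y - t)) * φ t)
            * ∫ t, f (y - t) * φ t := hcs
        _ = (∫ t, g (y - t) * φ t) * ∫ x, f (y - x) * φ x := by rfl
  have lhs_nn : ∀ y, 0 ≤ (if (∫ x, f (y - x) * φ x) = 0 then 0 else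
      (∫ x, deriv (deriv f) (y - x) * φ x) ^ 2 / (∫ x, f (y - x) * φ x)) := by
    intro y
    by_cases hD : (∫ x, f (y - x) * φ x) = 0
    · rw [if_pos hD]
    · rw [if_neg hD]
      exact div_nonneg (sq_nonneg _)
        (integral_nonneg fun x => mul_nonneg (hnn _) (hφpos x).le)
  calc (∫ y, (if (∫ x, f (y - x) * φ x) = 0 then 0 else
        (∫ x, deriv (deriv f) (y - x) * φ x) ^ 2 / (∫ x, f (y - x) * φ x)))
      ≤ ∫ y, convolution φ g L volume y :=
        integral_mono_of_nonneg (Filter.Eventually.of_forall lhs_nn) hC key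
    _ = ∫ y, g y := hval
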